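/- For all real ω ≥ 0, setting γ = sqrt((1 + 2ω)/(2(1 + ω)³)) and β = 1/(1 + 2ω), the inequality (1 + β)(1 − 2γ + γ²(1 + ω)) ≤ 1 − 1/(2(1 + ω)) holds. -/

import Mathlib

/-- The scalar contraction inequality for the shift stepsize γ and β = 1/(1+2ω). -/
theorem stmt9 (w : ℝ) (hw : 0 ≤ w) :
    (1 + 1 / (1 + 2 * w)) *
        (1 - 2 * Real.sqrt ((1 + 2 * w) / (2 * (1 + w) ^ 3))
          + (Real.sqrt ((1 + 2 * w) / (2 * (1 + w) ^ 3))) ^ 2 * (1 + w))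
      ≤ 1 - 1 / (2 * (1 + w)) := by
  set s := Real.sqrt ((1 + 2 * w) / (2 * (1 + w) ^ 3)) with hs
  have h1 : (0:ℝ) < 1 + w := by linarith
  have h2 : (0:ℝ) < 1 + 2 * w := by linarith
  have hs2 : s ^ 2 = (1 + 2 * w) / (2 * (1 + w) ^ 3) := Real.sq_sqrt (by positivity)
  have hsge : (4 * (1 + w) - 3 / 2) / (4 * (1 + w) ^ 2) ≤ s := by
    rw [hs, show (4 * (1 + w) - 3 / 2) / (4 * (1 + w) ^ 2)
        = Real.sqrt (((4 * (1 + w) - 3 / 2) / (4 * (1 + w) ^ 2)) ^ 2) from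
      (Real.sqrt_sq (div_nonneg (by nlinarith) (by positivity))).symm]
    apply Real.sqrt_le_sqrt
    rw [div_pow, div_le_div_iff₀ (by positivity) (by positivity)]

    nlinarith [sq_nonneg w, sq_nonneg (1 + w)]
  have key : 4 * (1 + w) - 3 / 2 ≤ 4 * (1 + w) ^ 2 * s := by
    rw [div_le_iff₀ (by positivity : (0:ℝ) < 4 * (1 + w) ^ 2)] at hsge
    linarith
  have hs2' : s ^ 2 * (2 * (1 + w) ^ 3) = 1 + 2 * w := by
    rw [hs2, div_mul_cancel₀ _ (by positivity)]
  rw [div_le_iff₀ (by positivity : (0:ℝ) < 4 * (1 + w) ^ 2)] at hsge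
  have hgoal : (1 + 1 / (1 + 2 * w)) = 2 * (1 + w) / (1 + 2 * w) := by
    field_simp; ring
  rw [hgoal, div_mul_eq_mul_div, div_le_iff₀ h2, sub_mul, one_mul,
    div_mul_eq_mul_div, one_mul, le_sub_iff_add_le, ← sub_nonneg]
  have he : 1 + 2 * w - (2 * (1 + w) * (1 - 2 * s + s ^ 2 * (1 + w)) + (1 + 2 * w) / (2 * (1 + w)))
      = ((1 + 2 * w) * (2 * (1 + w)) - 2 * (1 + w) * (1 - 2 * s + s ^ 2 * (1 + w)) * (2 * (1 + w)) - (1 + 2 * w)) / (2 * (1 + w)) := by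
    field_simp
    ring
  rw [he]
  apply div_nonneg _ (by positivity)
  nlinarith [key, hs2', sq_nonneg s, mul_pos h1 h2]
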